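/- arXiv:2505.00728 — 2 statements merged into one kernel-verified Lean document; each statement's English description precedes it below -/
import Mathlib

section
/- Let P = e_1…e_k be a path that is descending with respect to a charge drop schedule C, given by its arc sequence, and let 1 < i < k. If s̄(i) = k, then either the suffix e_i…e_k or the suffix e_{i+1}…e_k is descending with respect to the restriction of C to its vertices (with the drop at the subpath's first vertex set to 0); if s̲(i) = 1, then either the prefix e_1…e_i or the prefix e_1…e_{i−1} is descending with respect to the corresponding restriction of C. -/
open Finset

namespace EV

noncomputable section

/-- Charge after traversing `i` arcs of a path with arc gains `g`, battery capacity `B`,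
initial charge `b`. -/
def charge (B b : ℝ) (g : ℕ → ℝ) : ℕ → ℝ
  | 0 => b
  | i + 1 => min (charge B b g i + g i) B

/-- The traversal of the path with `n` arcs is feasible from initial charge `b`. -/
def Feasible (B b : ℝ) (g : ℕ → ℝ) (n : ℕ) : Prop :=
  ∀ i < n, 0 ≤ charge B b g i + g i

open Classical in
/-- Maximum final charge `α_b(P)` for a path `P` with `n` arc gains `g`,
as an extended real (`⊥ = -∞` if the traversal is infeasible). -/
def alpha (B b : ℝ) (g : ℕ → ℝ) (n : ℕ) : EReal :=
  if Feasible B b g n then ((charge B b g n : ℝ) : EReal) else ⊥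

/-- Gain of the `i`-th vertex (0-indexed): the sum of the first `i` arc gains. -/
def vGain (g : ℕ → ℝ) (i : ℕ) : ℝ := ∑ t ∈ Finset.range i, g t

/-- `P` is traversable: `α_B(P) ≥ 0`, i.e. feasible from a full battery. -/
def Traversable (B : ℝ) (g : ℕ → ℝ) (n : ℕ) : Prop := Feasible B B g n

/-- `C` is a charge drop schedule for a path with `n` arcs (vertices `0,…,n`):
no drop at the first vertex, all drops nonnegative. -/
def Schedule (C : ℕ → ℝ) (n : ℕ) : Prop := C 0 = 0 ∧ ∀ i ≤ n, 0 ≤ C i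

/-- Gain of vertex `i` with respect to the charge drop schedule `C`. -/
def cGain (g C : ℕ → ℝ) (i : ℕ) : ℝ := vGain g i - ∑ t ∈ Finset.range (i + 1), C t

/-- `P` (with `n` arcs) is ascending with respect to the schedule `C`. -/
def AscendingC (B : ℝ) (g C : ℕ → ℝ) (n : ℕ) : Prop :=
  Traversable B g n ∧ ∀ i ≤ n, 0 ≤ cGain g C i ∧ cGain g C i ≤ cGain g C n

/-- `P` (with `n` arcs) is descending with respect to the schedule `C`. -/
def DescendingC (B : ℝ) (g C : ℕ → ℝ) (n : ℕ) : Prop :=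
  Traversable B g n ∧ ∀ i ≤ n, cGain g C n ≤ cGain g C i ∧ cGain g C i ≤ 0

/-- `P` is monotone with respect to the schedule `C`. -/
def MonotoneC (B : ℝ) (g C : ℕ → ℝ) (n : ℕ) : Prop :=
  AscendingC B g C n ∨ DescendingC B g C n

/-- Ascending with respect to the zero schedule. -/
def Ascending (B : ℝ) (g : ℕ → ℝ) (n : ℕ) : Prop := AscendingC B g (fun _ => 0) n

/-- Descending with respect to the zero schedule. -/
def Descending (B : ℝ) (g : ℕ → ℝ) (n : ℕ) : Prop := DescendingC B g (fun _ => 0) n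

/-- Monotone with respect to the zero schedule. -/
def MonotonePath (B : ℝ) (g : ℕ → ℝ) (n : ℕ) : Prop := Ascending B g n ∨ Descending B g n

/-- The contiguous subpath whose arcs start at arc index `a`. -/
def SubPath (g : ℕ → ℝ) (a : ℕ) : ℕ → ℝ := fun t => g (a + t)

/-- Restriction of a charge drop schedule to the subpath starting at vertex `a`:
no drop at the subpath's first vertex. -/
def restrict (C : ℕ → ℝ) (a : ℕ) : ℕ → ℝ := fun t => if t = 0 then 0 else C (a + t)

/-- First-arc-bounded with respect to a schedule `C` (no drop at the second vertex,
and all vertex gains lie between the gains of the first two vertices). -/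
def FirstArcBoundedC (g C : ℕ → ℝ) (n : ℕ) : Prop :=
  C 1 = 0 ∧
    ((0 ≤ g 0 ∧ ∀ i ≤ n, 0 ≤ cGain g C i ∧ cGain g C i ≤ g 0) ∨
     (g 0 ≤ 0 ∧ ∀ i ≤ n, g 0 ≤ cGain g C i ∧ cGain g C i ≤ 0))

/-- Last-arc-bounded with respect to a schedule `C` (no drops at the last two vertices,
and all vertex gains lie between the gains of the last two vertices). -/
def LastArcBoundedC (g C : ℕ → ℝ) (n : ℕ) : Prop :=
  C (n - 1) = 0 ∧ C n = 0 ∧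
    ((0 ≤ g (n - 1) ∧ ∀ i ≤ n, cGain g C (n - 1) ≤ cGain g C i ∧ cGain g C i ≤ cGain g C n) ∨
     (g (n - 1) < 0 ∧ ∀ i ≤ n, cGain g C n ≤ cGain g C i ∧ cGain g C i ≤ cGain g C (n - 1)))

/-- First-arc-bounded (zero schedule). -/
def FirstArcBounded (g : ℕ → ℝ) (n : ℕ) : Prop := FirstArcBoundedC g (fun _ => 0) n

/-- Last-arc-bounded (zero schedule). -/
def LastArcBounded (g : ℕ → ℝ) (n : ℕ) : Prop := LastArcBoundedC g (fun _ => 0) n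

/-- Arc-bounded: first- or last-arc-bounded. -/
def ArcBounded (g : ℕ → ℝ) (n : ℕ) : Prop := FirstArcBounded g n ∨ LastArcBounded g n

/-- A funnel: arc-bounded and containing no monotone subpath of 2 or 3 consecutive arcs. -/
def Funnel (B : ℝ) (g : ℕ → ℝ) (n : ℕ) : Prop :=
  ArcBounded g n ∧ ∀ a m, (m = 2 ∨ m = 3) → a + m ≤ n → ¬ MonotonePath B (SubPath g a) m

/-- `j = s̄(i)`: the maximal index `j ≥ i` (among arcs of a path with `n` arcs) such that
the subpath of arcs `i,…,j` is first-arc-bounded. -/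
def IsSbar (g : ℕ → ℝ) (n i j : ℕ) : Prop :=
  i ≤ j ∧ j < n ∧ FirstArcBounded (SubPath g i) (j - i + 1) ∧
    ∀ j', i ≤ j' → j' < n → FirstArcBounded (SubPath g i) (j' - i + 1) → j' ≤ j

/-- `j = s̲(i)`: the minimal index `j ≤ i` such that the subpath of arcs `j,…,i`
is last-arc-bounded. -/
def IsSlow (g : ℕ → ℝ) (n i j : ℕ) : Prop :=
  j ≤ i ∧ i < n ∧ LastArcBounded (SubPath g j) (i - j + 1) ∧
    ∀ j', j' ≤ i → LastArcBounded (SubPath g j') (i - j' + 1) → j ≤ j'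

/-- Arc gains of the walk around a cycle with `m` arc gains `g`, starting at vertex `a`. -/
def cyc (g : ℕ → ℝ) (m a : ℕ) : ℕ → ℝ := fun t => g ((a + t) % m)

/-- A walk of length `ℓ` from `x` to `y` in the directed graph with arc relation `A`. -/
def IsWalk {V : Type*} (A : V → V → Prop) (w : ℕ → V) (ℓ : ℕ) (x y : V) : Prop :=
  w 0 = x ∧ w ℓ = y ∧ ∀ t < ℓ, A (w t) (w (t + 1))

/-- The sequence of arc gains induced by a walk `w` in a graph with gain function `g`. -/
def walkGains {V : Type*} (g : V → V → ℝ) (w : ℕ → V) : ℕ → ℝ :=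
  fun t => g (w t) (w (t + 1))

/- Arc-boundedness puts the largest gain of the suffix at one of its first two vertices (the
smallest gain of the prefix at one of its last two); starting the subpath there, nonnegative drops
only lower the later gains, and descent of the whole path bounds them from below. Subpaths stay
traversable because a full battery dominates any charge reached inside the path. -/

section Charge

variable {B : ℝ} {g : ℕ → ℝ}

lemma charge_mono {b b' : ℝ} (h : b ≤ b') : ∀ j, charge B b g j ≤ charge B b' g j
  | 0 => h
  | j + 1 => min_le_min (by linarith [charge_mono h j]) le_rfl

lemma charge_le {b : ℝ} (hb : b ≤ B) : ∀ j, charge B b g j ≤ B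
  | 0 => hb
  | _ + 1 => min_le_right _ _

lemma charge_subPath (b : ℝ) (a : ℕ) :
    ∀ j, charge B (charge B b g a) (SubPath g a) j = charge B b g (a + j)
  | 0 => rfl
  | j + 1 => by
    rw [charge, charge_subPath b a j, ← Nat.add_assoc, charge]
    rfl

lemma Traversable.mono {n m : ℕ} (h : Traversable B g n) (hm : m ≤ n) : Traversable B g m :=
  fun j hj => h j (by omega)

lemma Traversable.subPath {n : ℕ} (h : Traversable B g n) (a : ℕ) :
    Traversable B (SubPath g a) (n - a) := by
  intro j hj
  have hstart := charge_mono (B := B) (g := SubPath g a) (charge_le (B := B) (g := g) le_rfl a) j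
  rw [charge_subPath] at hstart
  have hfeas := h (a + j) (by omega)
  simp only [SubPath]
  linarith

end Charge

section Gain

variable {g C : ℕ → ℝ}

lemma vGain_subPath (g : ℕ → ℝ) (a j : ℕ) :
    vGain (SubPath g a) j = vGain g (a + j) - vGain g a := by
  simp only [vGain, SubPath, Finset.sum_range_add]
  ring

lemma sum_range_restrict (C : ℕ → ℝ) (a j : ℕ) :
    ∑ t ∈ range (j + 1), restrict C a t =
      ∑ t ∈ range (a + j + 1), C t - ∑ t ∈ range (a + 1), C t := by
  rw [Finset.sum_range_succ', show a + j + 1 = a + 1 + j by omega, Finset.sum_range_add]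
  simp [restrict, Nat.add_assoc, Nat.add_comm 1]

lemma cGain_subPath_restrict (g C : ℕ → ℝ) (a j : ℕ) :
    cGain (SubPath g a) (restrict C a) j = cGain g C (a + j) - cGain g C a := by
  rw [cGain, cGain, cGain, vGain_subPath, sum_range_restrict]
  ring

@[simp]
lemma cGain_zero (g : ℕ → ℝ) (j : ℕ) : cGain g (fun _ => 0) j = vGain g j := by
  simp [cGain]

lemma cGain_le_of_vGain_le {a b : ℕ} (hC : ∀ t ≤ b, 0 ≤ C t) (hab : a ≤ b)
    (hv : vGain g b ≤ vGain g a) : cGain g C b ≤ cGain g C a := by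
  have hdrops : ∑ t ∈ range (a + 1), C t ≤ ∑ t ∈ range (b + 1), C t :=
    Finset.sum_le_sum_of_subset_of_nonneg (Finset.range_subset_range.mpr (by omega))
      fun t ht _ => hC t (by simp at ht; omega)
  rw [cGain, cGain]
  linarith

lemma FirstArcBounded.vGain_le {a m : ℕ} (h : FirstArcBounded (SubPath g a) m) :
    (∀ j, a ≤ j → j ≤ a + m → vGain g j ≤ vGain g a) ∨
      (∀ j, a ≤ j → j ≤ a + m → vGain g j ≤ vGain g (a + 1)) := by
  obtain ⟨-, ⟨-, hb⟩ | ⟨-, hb⟩⟩ := h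
  · refine Or.inr fun j hj hjm => ?_
    have hle := (hb (j - a) (by omega)).2
    rw [cGain_zero, vGain_subPath, Nat.add_sub_cancel' hj] at hle
    have hsucc : vGain g (a + 1) = vGain g a + g a := Finset.sum_range_succ _ _
    simp only [SubPath, Nat.add_zero] at hle
    linarith
  · refine Or.inl fun j hj hjm => ?_
    have hle := (hb (j - a) (by omega)).2
    rw [cGain_zero, vGain_subPath, Nat.add_sub_cancel' hj] at hle
    linarith

lemma LastArcBounded.le_vGain {m : ℕ} (h : LastArcBounded g (m + 1)) :
    (∀ j ≤ m + 1, vGain g (m + 1) ≤ vGain g j) ∨ (∀ j ≤ m, vGain g m ≤ vGain g j) := by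
  obtain ⟨-, -, ⟨-, hb⟩ | ⟨-, hb⟩⟩ := h <;> simp only [Nat.add_sub_cancel, cGain_zero] at hb
  · exact Or.inr fun j hj => (hb j (by omega)).1
  · exact Or.inl fun j hj => (hb j hj).1

end Gain

section Descending

variable {B : ℝ} {g C : ℕ → ℝ} {n : ℕ}

lemma DescendingC.subPath (hP : DescendingC B g C n) (hC : ∀ t ≤ n, 0 ≤ C t) {a : ℕ}
    (ha : a ≤ n) (hmax : ∀ j, a ≤ j → j ≤ n → vGain g j ≤ vGain g a) :
    DescendingC B (SubPath g a) (restrict C a) (n - a) := by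
  refine ⟨hP.1.subPath a, fun j hj => ?_⟩
  rw [cGain_subPath_restrict, cGain_subPath_restrict, Nat.add_sub_cancel' ha]
  have hlow := (hP.2 (a + j) (by omega)).1
  have hup := cGain_le_of_vGain_le (fun t ht => hC t (by omega)) (Nat.le_add_right a j)
    (hmax (a + j) (by omega) (by omega))
  constructor <;> linarith

lemma DescendingC.prefix (hP : DescendingC B g C n) {m : ℕ} (hm : m ≤ n)
    (hC : ∀ t ≤ m, 0 ≤ C t) (hmin : ∀ j ≤ m, vGain g m ≤ vGain g j) :
    DescendingC B g C m :=
  ⟨hP.1.mono hm, fun j hj => ⟨cGain_le_of_vGain_le hC hj (hmin j hj), (hP.2 j (by omega)).2⟩⟩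

end Descending

theorem maximal_arcBounded_descending_general (B : ℝ) (g C : ℕ → ℝ) (n : ℕ)
    (hC : Schedule C n) (hP : DescendingC B g C n) (i : ℕ) :
    (IsSbar g n i (n - 1) →
      DescendingC B (SubPath g i) (restrict C i) (n - i) ∨
      DescendingC B (SubPath g (i + 1)) (restrict C (i + 1)) (n - (i + 1))) ∧
    (IsSlow g n i 0 →
      DescendingC B g C (i + 1) ∨ DescendingC B g C i) := by
  constructor
  · rintro ⟨hin, hn, hfab, -⟩
    have hend : i + (n - 1 - i + 1) = n := by omega
    rcases hfab.vGain_le with hmax | hmax <;> rw [hend] at hmax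
    · exact Or.inl (hP.subPath hC.2 (by omega) hmax)
    · exact Or.inr (hP.subPath hC.2 (by omega) fun j hj hjn => hmax j (by omega) hjn)
  · rintro ⟨-, hin, hlab, -⟩
    have hsub : SubPath g 0 = g := funext fun t => congrArg g (Nat.zero_add t)
    rw [hsub, Nat.sub_zero] at hlab
    rcases hlab.le_vGain with hmin | hmin
    · exact Or.inl (hP.prefix (by omega) (fun t ht => hC.2 t (by omega)) hmin)
    · exact Or.inr (hP.prefix (by omega) (fun t ht => hC.2 t (by omega)) hmin)

/-- Let `P = e_0 … e_{n-1}` be descending with respect to a schedule `C` and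
`1 ≤ i`, `i + 1 < n`. If `s̄(i) = n - 1` then the suffix `e_i … e_{n-1}` or
`e_{i+1} … e_{n-1}` is descending with respect to the restriction of `C` (drop at the
subpath's first vertex set to `0`); if `s̲(i) = 0` then the prefix `e_0 … e_i` or
`e_0 … e_{i-1}` is descending with respect to (the corresponding restriction of) `C`. -/
theorem maximal_arcBounded_descending (B : ℝ) (hB : 0 < B) (g C : ℕ → ℝ) (n : ℕ)
    (hC : Schedule C n) (hP : DescendingC B g C n) (i : ℕ) (h1 : 1 ≤ i) (h2 : i + 1 < n) :
    (IsSbar g n i (n - 1) →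
      DescendingC B (SubPath g i) (restrict C i) (n - i) ∨
      DescendingC B (SubPath g (i + 1)) (restrict C (i + 1)) (n - (i + 1))) ∧
    (IsSlow g n i 0 →
      DescendingC B g C (i + 1) ∨ DescendingC B g C i) :=
  maximal_arcBounded_descending_general B g C n hC hP i

end

end EV
end

section
/- Let C be a cycle with vertices u_1,…,u_m and arc gains g_1,…,g_m (arc i goes from u_i to u_{i+1 mod m}), with total gain g(C) = Σ g_i > 0. Suppose the closed walk around C starting at u_1 (traversing each arc exactly once and returning to u_1) is strongly traversable. Then there exist vertices x and y on C such that either x = y and the closed walk around C starting at x is ascending, or x ≠ y and the simple path from x to y along C is ascending while the simple path from y to x along C is descending (with respect to the zero schedule). -/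
open Finset

namespace EV

noncomputable section

/-! Strong traversability makes every vertex gain along the cycle nonnegative and every drop of
the vertex gain at most `B`; these two facts survive going once around the cycle, so every walk of
at most `m` arcs along the cycle is traversable from a full battery. Lift the vertex gains to
`F t = ∑ u < t, g (u % m)`, so that `F (t + m) = F t + g(C)`, and pick a window `[x, x + d]`,
`1 ≤ d ≤ m`, of maximal gain `F (x + d) - F x`. Comparing with the windows `[x, t]`, `[t, x + d]`
and `[t, x + d + m]` shows that `F` stays between `F x` and `F (x + d)` on `[x, x + d]` and
between `F (x + m)` and `F (x + d)` on `[x + d, x + m]`. -/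

section Charge

variable {B b : ℝ} {g : ℕ → ℝ} {n : ℕ}

lemma vGain_succ (g : ℕ → ℝ) (i : ℕ) : vGain g (i + 1) = vGain g i + g i :=
  Finset.sum_range_succ g i

lemma charge_le_capacity (hb : b ≤ B) : ∀ i, charge B b g i ≤ B
  | 0 => hb
  | _ + 1 => min_le_right _ _

lemma charge_le_charge_add_vGain_sub {i j : ℕ} (hji : j ≤ i) :
    charge B b g i ≤ charge B b g j + (vGain g i - vGain g j) := by
  induction i, hji using Nat.le_induction with
  | base => simp
  | succ i _ ih =>
    rw [charge, vGain_succ]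
    linarith [min_le_left (charge B b g i + g i) B]

lemma Feasible.neg_le_vGain (h : Feasible B b g n) {t : ℕ} (ht : t ≤ n) (hb : 0 ≤ b) :
    -b ≤ vGain g t := by
  cases t with
  | zero => simp [vGain, hb]
  | succ i =>
    have hi : charge B b g i ≤ b + vGain g i := by
      simpa [charge, vGain] using charge_le_charge_add_vGain_sub (B := B) (b := b) (g := g)
        (Nat.zero_le i)
    rw [vGain_succ]
    linarith [h i ht]

lemma Feasible.vGain_sub_le (h : Feasible B b g n) (hbB : b ≤ B) {j t : ℕ} (hjt : j < t)
    (htn : t ≤ n) : vGain g j - vGain g t ≤ B := by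
  obtain ⟨i, rfl⟩ : ∃ i, t = i + 1 := ⟨t - 1, by omega⟩
  have := charge_le_charge_add_vGain_sub (B := B) (b := b) (g := g) (Nat.le_of_lt_succ hjt)
  rw [vGain_succ]
  linarith [h i htn, charge_le_capacity (g := g) hbB j]

/-- From a full battery the charge after `i` arcs is at least `B` minus the drop since some
earlier vertex `j`: the last vertex where the battery was full. -/
lemma feasible_of_vGain_sub_le (h : ∀ j t, j < t → t ≤ n → vGain g j - vGain g t ≤ B) :
    Feasible B B g n := by
  have key : ∀ i, ∃ j ≤ i, B + vGain g i - vGain g j ≤ charge B B g i := by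
    intro i
    induction i with
    | zero => exact ⟨0, le_rfl, by simp [charge]⟩
    | succ i ih =>
      obtain ⟨j, hj, hc⟩ := ih
      rcases le_total (charge B B g i + g i) B with hle | hle
      · refine ⟨j, by omega, ?_⟩
        rw [charge, min_eq_left hle, vGain_succ]
        linarith
      · exact ⟨i + 1, le_rfl, by rw [charge, min_eq_right hle]; linarith⟩
  intro i hi
  obtain ⟨j, hj, hc⟩ := key i
  linarith [h j (i + 1) (by omega) hi, vGain_succ g i]

lemma ascending_iff : Ascending B g n ↔
    Traversable B g n ∧ ∀ i ≤ n, 0 ≤ vGain g i ∧ vGain g i ≤ vGain g n := by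
  simp [Ascending, AscendingC, cGain]

lemma descending_iff : Descending B g n ↔
    Traversable B g n ∧ ∀ i ≤ n, vGain g n ≤ vGain g i ∧ vGain g i ≤ 0 := by
  simp [Descending, DescendingC, cGain]

end Charge

section Window

variable {F : ℕ → ℝ} {m : ℕ} {S : ℝ}

lemma window_sub_eq_mod (hper : ∀ t, F (t + m) = F t + S) (s k : ℕ) :
    F (s + k) - F s = F (s % m + k) - F (s % m) := by
  have hφ : Function.Periodic (fun s => F (s + k) - F s) m := fun s => by
    simp only [Nat.add_right_comm s m k, hper]
    ring
  exact (hφ.map_mod_nat s).symm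

lemma exists_max_window (hm : 0 < m) (hper : ∀ t, F (t + m) = F t + S) :
    ∃ x < m, ∃ d, 0 < d ∧ d ≤ m ∧
      ∀ s k, 0 < k → k ≤ m → F (s + k) - F s ≤ F (x + d) - F x := by
  obtain ⟨⟨x, e⟩, hxe, hmax⟩ := (range m ×ˢ range m).exists_max_image
    (fun p => F (p.1 + (p.2 + 1)) - F p.1) ⟨(0, 0), by simp [hm]⟩
  simp only [mem_product, mem_range] at hxe
  refine ⟨x, hxe.1, e + 1, by omega, by omega, fun s k hk hkm => ?_⟩
  obtain ⟨k, rfl⟩ : ∃ k', k = k' + 1 := ⟨k - 1, by omega⟩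
  rw [window_sub_eq_mod hper]
  exact hmax (s % m, k) (by simp [Nat.mod_lt s hm]; omega)

lemma exists_rising_falling_split (hm : 0 < m) (hS : 0 ≤ S) (hper : ∀ t, F (t + m) = F t + S) :
    ∃ x < m, ∃ d, 0 < d ∧ d ≤ m ∧
      (∀ i ≤ d, F x ≤ F (x + i) ∧ F (x + i) ≤ F (x + d)) ∧
      (∀ i ≤ m - d, F (x + m) ≤ F (x + d + i) ∧ F (x + d + i) ≤ F (x + d)) := by
  obtain ⟨x, hx, d, hd, hdm, hmax⟩ := exists_max_window hm hper
  have hgain : F x + S ≤ F (x + d) := by linarith [hmax x m hm le_rfl, hper x]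
  have below : ∀ i ≤ m, F (x + i) ≤ F (x + d) := by
    intro i hi
    rcases Nat.eq_zero_or_pos i with rfl | hi0
    · rw [add_zero]
      linarith
    · linarith [hmax x i hi0 hi]
  refine ⟨x, hx, d, hd, hdm, fun i hi => ⟨?_, below i (by omega)⟩,
    fun i hi => ⟨?_, by simpa [add_assoc] using below (d + i) (by omega)⟩⟩
  · rcases hi.lt_or_eq with hi | rfl
    · have := hmax (x + i) (d - i) (by omega) (by omega)
      rw [show x + i + (d - i) = x + d by omega] at this
      linarith
    · linarith
  · have := hmax (x + d + i) (m - i) (by omega) (by omega)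
    rw [show x + d + i + (m - i) = x + d + m by omega, hper] at this
    rw [hper]
    linarith

end Window

section Cycle

variable {B : ℝ} {g : ℕ → ℝ} {m : ℕ}

/-- Vertex gains along the cycle, lifted to the universal cover. -/
def liftSum (g : ℕ → ℝ) (m t : ℕ) : ℝ := ∑ u ∈ range t, g (u % m)

lemma liftSum_of_le {t : ℕ} (ht : t ≤ m) : liftSum g m t = vGain g t :=
  sum_congr rfl fun u hu => by rw [Nat.mod_eq_of_lt (by simp at hu; omega)]

lemma liftSum_add_period (t : ℕ) : liftSum g m (t + m) = liftSum g m t + vGain g m := by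
  rw [liftSum, add_comm, sum_range_add, ← liftSum, liftSum_of_le le_rfl, add_comm]
  simp [liftSum]

lemma vGain_cyc (a t : ℕ) : vGain (cyc g m a) t = liftSum g m (a + t) - liftSum g m a := by
  simp [liftSum, sum_range_add, vGain, cyc]

lemma cyc_mod (a : ℕ) : cyc g m (a % m) = cyc g m a := by
  funext t
  simp [cyc, Nat.mod_add_mod]

lemma liftSum_sub_le (hm : 0 < m) (hfeas : Feasible B 0 g m) (hB : 0 ≤ B) (s : ℕ) {k : ℕ}
    (hk : 0 < k) (hkm : k ≤ m) : liftSum g m s - liftSum g m (s + k) ≤ B := by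
  have hwin := window_sub_eq_mod (F := liftSum g m) liftSum_add_period s k
  have hr : s % m < m := Nat.mod_lt s hm
  generalize s % m = r at hwin hr
  rcases le_or_gt (r + k) m with hrk | hrk
  · rw [liftSum_of_le hr.le, liftSum_of_le hrk] at hwin
    linarith [hfeas.vGain_sub_le hB (by omega : r < r + k) hrk]
  · rw [show r + k = r + k - m + m by omega, liftSum_add_period, liftSum_of_le hr.le,
      liftSum_of_le (t := r + k - m) (by omega)] at hwin
    linarith [hfeas.vGain_sub_le hB hr le_rfl, hfeas.neg_le_vGain (t := r + k - m) (by omega) le_rfl]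

lemma traversable_cyc (hm : 0 < m) (hfeas : Feasible B 0 g m) (hB : 0 ≤ B) (a : ℕ) {n : ℕ}
    (hn : n ≤ m) : Traversable B (cyc g m a) n :=
  feasible_of_vGain_sub_le fun j t hjt htn => by
    have := liftSum_sub_le hm hfeas hB (a + j) (k := t - j) (by omega) (by omega)
    rw [show a + j + (t - j) = a + t by omega] at this
    rw [vGain_cyc, vGain_cyc]
    linarith

lemma ascending_cyc (hm : 0 < m) (hfeas : Feasible B 0 g m) (hB : 0 ≤ B) {a n : ℕ} (hn : n ≤ m)
    (h : ∀ i ≤ n, liftSum g m a ≤ liftSum g m (a + i) ∧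
      liftSum g m (a + i) ≤ liftSum g m (a + n)) :
    Ascending B (cyc g m a) n := by
  refine ascending_iff.2 ⟨traversable_cyc hm hfeas hB a hn, fun i hi => ?_⟩
  simp only [vGain_cyc, sub_nonneg, sub_le_sub_iff_right]
  exact h i hi

lemma descending_cyc (hm : 0 < m) (hfeas : Feasible B 0 g m) (hB : 0 ≤ B) {a n : ℕ} (hn : n ≤ m)
    (h : ∀ i ≤ n, liftSum g m (a + n) ≤ liftSum g m (a + i) ∧
      liftSum g m (a + i) ≤ liftSum g m a) :
    Descending B (cyc g m a) n := by
  refine descending_iff.2 ⟨traversable_cyc hm hfeas hB a hn, fun i hi => ?_⟩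
  simp only [vGain_cyc, sub_nonpos, sub_le_sub_iff_right]
  exact h i hi

end Cycle

lemma cyclic_distances {m x d : ℕ} (hx : x < m) (hd : 0 < d) (hdm : d < m) :
    x ≠ (x + d) % m ∧ ((x + d) % m + m - x) % m = d ∧ (x + m - (x + d) % m) % m = m - d := by
  rcases lt_or_ge (x + d) m with h | h
  · rw [Nat.mod_eq_of_lt h, show x + d + m - x = d + m by omega, Nat.add_mod_right,
      show x + m - (x + d) = m - d by omega, Nat.mod_eq_of_lt hdm, Nat.mod_eq_of_lt (by omega)]
    omega
  · rw [Nat.mod_eq_sub_mod h, Nat.mod_eq_of_lt (by omega), show x + d - m + m - x = d by omega,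
      show x + m - (x + d - m) = m - d + m by omega, Nat.add_mod_right, Nat.mod_eq_of_lt hdm,
      Nat.mod_eq_of_lt (by omega)]
    omega

theorem cycle_entry_exit_general (B : ℝ) (hB : 0 < B) (m : ℕ) (hm : 1 ≤ m) (g : ℕ → ℝ)
    (hst : (0 : EReal) ≤ alpha B 0 g m) :
    ∃ x < m, ∃ y < m,
      (x = y ∧ Ascending B (cyc g m x) m) ∨
      (x ≠ y ∧ Ascending B (cyc g m x) ((y + m - x) % m) ∧
        Descending B (cyc g m y) ((x + m - y) % m)) := by
  have hfeas : Feasible B 0 g m := by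
    by_contra h
    simp [alpha, h] at hst
  have hS : 0 ≤ vGain g m := by simpa using hfeas.neg_le_vGain le_rfl le_rfl
  obtain ⟨x, hx, d, hd, hdm, hrise, hfall⟩ := exists_rising_falling_split hm hS liftSum_add_period
  have hasc := ascending_cyc hm hfeas hB.le hdm hrise
  have hdesc := descending_cyc (a := x + d) hm hfeas hB.le (Nat.sub_le m d)
    (by simpa [show x + d + (m - d) = x + m by omega] using hfall)
  rcases hdm.lt_or_eq with hdm | rfl
  · obtain ⟨hxy, hxy_dist, hyx_dist⟩ := cyclic_distances hx hd hdm
    refine ⟨x, hx, (x + d) % m, Nat.mod_lt _ hm, Or.inr ⟨hxy, ?_, ?_⟩⟩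
    · rwa [hxy_dist]
    · rwa [hyx_dist, cyc_mod]
  · exact ⟨x, hx, x, hx, Or.inl ⟨rfl, hasc⟩⟩

/-- Let `C` be a cycle with `m` arcs of gains `g 0, …, g (m-1)` and positive
total gain, such that the closed walk around `C` starting at vertex `0` is strongly
traversable. Then there are vertices `x`, `y` on `C` such that either `x = y` and the
closed walk around `C` starting at `x` is ascending, or `x ≠ y` and the simple path from
`x` to `y` along `C` is ascending while the simple path from `y` to `x` along `C` is
descending. -/
theorem cycle_entry_exit (B : ℝ) (hB : 0 < B) (m : ℕ) (hm : 1 ≤ m) (g : ℕ → ℝ)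
    (hpos : 0 < ∑ t ∈ Finset.range m, g t)
    (hst : (0 : EReal) ≤ alpha B 0 g m) :
    ∃ x < m, ∃ y < m,
      (x = y ∧ Ascending B (cyc g m x) m) ∨
      (x ≠ y ∧ Ascending B (cyc g m x) ((y + m - x) % m) ∧
        Descending B (cyc g m y) ((x + m - y) % m)) :=
  cycle_entry_exit_general B hB m hm g hst

end

end EV
end
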